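/- arXiv:2206.09444 — 3 statements merged into one kernel-verified Lean document; each statement's English description precedes it below -/
import Mathlib

section
/- Let ψ₀ : ℝ → ℝ be a measurable function such that ∫ |ψ₀(η)| φ(η; m, ν²) dη < ∞ for every m ∈ ℝ and every ν > 0. Then the function Ψ₀(m, ν) = ∫ ψ₀(η) φ(η; m, ν²) dη is infinitely continuously differentiable (C^∞) jointly in (m, ν) on ℝ × (0, ∞). -/
set_option maxHeartbeats 1000000
set_option synthInstance.maxHeartbeats 200000

open MeasureTheory Real Filter
open Nat
open scoped ENNReal NNReal Topology

/-- Gaussian density with mean `m` and variance `ν ^ 2`, evaluated at `x`: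
`φ(x; m, ν²) = (2πν²)^{-1/2} exp(−(x−m)²/(2ν²))`. -/
noncomputable def gpdf (m ν x : ℝ) : ℝ :=
  (Real.sqrt (2 * Real.pi * ν ^ 2))⁻¹ * Real.exp (-((x - m) ^ 2) / (2 * ν ^ 2))

/-- Gaussian cumulative distribution function with mean `m` and variance `ν ^ 2`:
`Φ(c; m, ν²) = ∫_{−∞}^{c} φ(η; m, ν²) dη`. -/
noncomputable def gcdf (m ν c : ℝ) : ℝ := ∫ x in Set.Iio c, gpdf m ν x

noncomputable def Gf (ψ₀ : ℝ → ℝ) (p : ℝ × ℝ) : ℝ :=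
  ∫ η, ψ₀ η * Real.exp (-p.1 * η ^ 2 + p.2 * η)


lemma integrable_exp_kernel {ψ₀ : ℝ → ℝ}
    (hint : ∀ m ν : ℝ, 0 < ν → Integrable (fun η => |ψ₀ η| * gpdf m ν η))
    {a : ℝ} (b : ℝ) (ha : 0 < a) :
    Integrable fun η => |ψ₀ η| * Real.exp (-a * η ^ 2 + b * η) := by
  have hs : (0:ℝ) < Real.sqrt (2*a) := Real.sqrt_pos.2 (by linarith)
  set ν : ℝ := (Real.sqrt (2*a))⁻¹ with hνdef
  have hν0 : 0 < ν := inv_pos.2 hs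
  have hν2 : ν ^ 2 = (2*a)⁻¹ := by
    rw [hνdef, inv_pow, Real.sq_sqrt (by linarith)]
  set C : ℝ := Real.sqrt (2*Real.pi*ν^2) * Real.exp (b^2/(4*a)) with hCdef
  have hS : (0:ℝ) < Real.sqrt (2*Real.pi*ν^2) := Real.sqrt_pos.2 (by positivity)
  have key : ∀ η, C * gpdf (b/(2*a)) ν η = Real.exp (-a * η ^ 2 + b * η) := by
    intro η
    unfold gpdf
    rw [show -((η - b/(2*a))^2)/(2*ν^2) = -a*η^2 + b*η - b^2/(4*a) by
      rw [hν2]; field_simp; ring]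
    rw [hCdef]
    calc Real.sqrt (2*Real.pi*ν^2) * Real.exp (b^2/(4*a)) *
          ((Real.sqrt (2*Real.pi*ν^2))⁻¹ * Real.exp (-a*η^2 + b*η - b^2/(4*a)))
        = (Real.sqrt (2*Real.pi*ν^2) * (Real.sqrt (2*Real.pi*ν^2))⁻¹) *
          (Real.exp (b^2/(4*a)) * Real.exp (-a*η^2 + b*η - b^2/(4*a))) := by ring
      _ = Real.exp (b^2/(4*a)) * Real.exp (-a*η^2 + b*η - b^2/(4*a)) := by
          rw [mul_inv_cancel₀ (ne_of_gt hS), one_mul]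
      _ = Real.exp (b^2/(4*a) + (-a*η^2 + b*η - b^2/(4*a))) := (Real.exp_add _ _).symm
      _ = Real.exp (-a*η^2 + b*η) := by ring_nf
  have h := (hint (b/(2*a)) ν hν0).const_mul C
  exact h.congr (Filter.Eventually.of_forall fun η => by
    simp only []
    rw [show C * (|ψ₀ η| * gpdf (b/(2*a)) ν η) = |ψ₀ η| * (C * gpdf (b/(2*a)) ν η) by ring,
      key η])

lemma integrable_dom {ψ₀ : ℝ → ℝ} (hmeas : Measurable ψ₀)
    (hint : ∀ m ν : ℝ, 0 < ν → Integrable (fun η => |ψ₀ η| * gpdf m ν η))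
    {a b s : ℝ} (ha : 0 < a) (hs : 0 ≤ s) (hsa : s < a) :
    Integrable fun η =>
      |ψ₀ η| * (Real.exp (-a * η ^ 2 + b * η) * Real.exp (s * (η ^ 2 + |η|))) := by
  have h1 := integrable_exp_kernel hint (b + s) (show (0:ℝ) < a - s by linarith)
  have h2 := integrable_exp_kernel hint (b - s) (show (0:ℝ) < a - s by linarith)
  refine (h1.add h2).mono' ?_ ?_
  · exact ((hmeas.abs.mul (by fun_prop)).aestronglyMeasurable)
  · refine Filter.Eventually.of_forall fun η => ?_
    rw [Real.norm_of_nonneg (by positivity)]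
    have hcomb : Real.exp (-a * η ^ 2 + b * η) * Real.exp (s * (η ^ 2 + |η|))
        = Real.exp (-(a-s) * η ^ 2 + b * η + s * |η|) := by
      rw [← Real.exp_add]; ring_nf
    rw [hcomb]
    rcases le_or_gt 0 η with hη | hη
    · rw [abs_of_nonneg hη]
      have : Real.exp (-(a-s) * η ^ 2 + b * η + s * η)
          = Real.exp (-(a-s) * η ^ 2 + (b+s) * η) := by ring_nf
      rw [this]
      simp only [Pi.add_apply]
      have hpos : 0 ≤ |ψ₀ η| * Real.exp (-(a-s) * η ^ 2 + (b-s) * η) := by positivity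
      linarith
    · rw [abs_of_neg hη]
      have : Real.exp (-(a-s) * η ^ 2 + b * η + s * -η)
          = Real.exp (-(a-s) * η ^ 2 + (b-s) * η) := by ring_nf
      rw [this]
      simp only [Pi.add_apply]
      have hpos : 0 ≤ |ψ₀ η| * Real.exp (-(a-s) * η ^ 2 + (b+s) * η) := by positivity
      linarith

lemma analyticAt_Gf {ψ₀ : ℝ → ℝ} (hmeas : Measurable ψ₀)
    (hint : ∀ m ν : ℝ, 0 < ν → Integrable (fun η => |ψ₀ η| * gpdf m ν η))
    {p₀ : ℝ × ℝ} (hp : 0 < p₀.1) : AnalyticAt ℝ (Gf ψ₀) p₀ := by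
  classical
  set r : ℝ := p₀.1 / 2 with hrdef
  have hr : 0 < r := by positivity
  have hra : r < p₀.1 := by simp [hrdef]; linarith
  set e₀ : ℝ → ℝ := fun η => Real.exp (-p₀.1 * η ^ 2 + p₀.2 * η) with he₀
  set c : ℝ → ℝ := fun η => ψ₀ η * e₀ η with hcdef
  set t : ℝ → ℝ := fun η => η ^ 2 + |η| with htdef
  have ht0 : ∀ η, 0 ≤ t η := fun η => by positivity
  -- the linear form
  set Λ : ℝ → (ℝ × ℝ →L[ℝ] ℝ) := fun η =>
    η • ContinuousLinearMap.snd ℝ ℝ ℝ - (η ^ 2) • ContinuousLinearMap.fst ℝ ℝ ℝ with hΛdef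
  have hΛ_apply : ∀ η (q : ℝ × ℝ), Λ η q = -q.1 * η ^ 2 + q.2 * η := by
    intro η q
    simp [hΛdef, ContinuousLinearMap.smul_apply, smul_eq_mul]
    ring
  have hΛ_norm : ∀ η, ‖Λ η‖ ≤ t η := by
    intro η
    refine (norm_sub_le _ _).trans ?_
    have h1 : ‖η • ContinuousLinearMap.snd ℝ ℝ ℝ‖ ≤ |η| * 1 :=
      (norm_smul_le η (ContinuousLinearMap.snd ℝ ℝ ℝ)).trans (by
        rw [Real.norm_eq_abs]
        exact mul_le_mul_of_nonneg_left (ContinuousLinearMap.norm_snd_le ℝ ℝ ℝ) (abs_nonneg η))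
    have h2 : ‖(η ^ 2) • ContinuousLinearMap.fst ℝ ℝ ℝ‖ ≤ |η ^ 2| * 1 :=
      (norm_smul_le (η ^ 2) (ContinuousLinearMap.fst ℝ ℝ ℝ)).trans (by
        rw [Real.norm_eq_abs]
        exact mul_le_mul_of_nonneg_left (ContinuousLinearMap.norm_fst_le ℝ ℝ ℝ) (abs_nonneg _))
    simp only [htdef]
    rw [abs_of_nonneg (by positivity : (0:ℝ) ≤ η ^ 2)] at h2
    linarith
  have hΛcont : Continuous Λ := by
    exact (continuous_id.smul continuous_const).sub ((continuous_pow 2).smul continuous_const)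
  -- the multilinear maps
  let P : ∀ n : ℕ, ℝ → ContinuousMultilinearMap ℝ (fun _ : Fin n => ℝ × ℝ) ℝ :=
    fun n η => (ContinuousMultilinearMap.mkPiAlgebra ℝ (Fin n) ℝ).compContinuousLinearMap
      (fun _ => Λ η)
  have hPcont : ∀ n, Continuous (P n) := by
    intro n
    have h1 : Continuous fun η => (fun _ : Fin n => Λ η) := continuous_pi fun _ => hΛcont
    exact ((ContinuousMultilinearMap.mkPiAlgebra ℝ (Fin n)
      ℝ).compContinuousLinearMapLRight).cont.comp h1
  have hP_apply : ∀ (n : ℕ) η (q : ℝ × ℝ), P n η (fun _ => q) = (Λ η q) ^ n := by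
    intro n η q
    simp [P, ContinuousMultilinearMap.compContinuousLinearMap_apply,
      ContinuousMultilinearMap.mkPiAlgebra_apply, Finset.prod_const, Finset.card_univ]
  have hP_norm : ∀ (n : ℕ) η, ‖P n η‖ ≤ t η ^ n := by
    intro n η
    refine (ContinuousMultilinearMap.norm_compContinuousLinearMap_le _ _).trans ?_
    rw [ContinuousMultilinearMap.norm_mkPiAlgebra, one_mul]
    calc ∏ _i : Fin n, ‖Λ η‖ ≤ ∏ _i : Fin n, t η :=
          Finset.prod_le_prod (fun _ _ => norm_nonneg _) (fun _ _ => hΛ_norm η)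
      _ = t η ^ n := by rw [Finset.prod_const, Finset.card_univ, Fintype.card_fin]
  -- integrand of the power series coefficients
  let Fn : ∀ n : ℕ, ℝ → ContinuousMultilinearMap ℝ (fun _ : Fin n => ℝ × ℝ) ℝ :=
    fun n η => (c η / n !) • P n η
  have hc_meas : Measurable c := hmeas.mul (by fun_prop)
  have hDint : Integrable fun η => |ψ₀ η| * (e₀ η * Real.exp (r * t η)) :=
    integrable_dom hmeas hint hp hr.le hra
  -- key pointwise estimate
  have hkey : ∀ (n : ℕ) (s : ℝ), 0 ≤ s → ∀ η, (s * t η) ^ n / n ! ≤ (s/r) ^ n * Real.exp (r * t η) := by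
    intro n s hs η
    have h1 : (r * t η) ^ n / n ! ≤ Real.exp (r * t η) :=
      Real.pow_div_factorial_le_exp (r * t η) (by positivity) n
    calc (s * t η) ^ n / n ! = (s/r) ^ n * ((r * t η) ^ n / n !) := by
          rw [mul_pow, div_pow, mul_pow]
          field_simp
      _ ≤ (s/r) ^ n * Real.exp (r * t η) := by
          apply mul_le_mul_of_nonneg_left h1 (by positivity)
  have hFn_norm : ∀ n η, ‖Fn n η‖ ≤ (1/r) ^ n * (|ψ₀ η| * (e₀ η * Real.exp (r * t η))) := by
    intro n η
    have he₀pos : 0 < e₀ η := Real.exp_pos _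
    have h1 : ‖Fn n η‖ ≤ |c η| / n ! * ‖P n η‖ :=
      (norm_smul_le (c η / (n ! : ℝ)) (P n η)).trans (le_of_eq (by
        rw [Real.norm_eq_abs, abs_div, abs_of_nonneg (by positivity : (0:ℝ) ≤ (n ! : ℝ))]))
    refine h1.trans ?_
    have h2 : |c η| = |ψ₀ η| * e₀ η := by
      rw [hcdef]; rw [abs_mul, abs_of_pos he₀pos]
    have h3 : t η ^ n / n ! ≤ (1/r) ^ n * Real.exp (r * t η) := by
      have := hkey n 1 zero_le_one η
      simpa using this
    calc |c η| / n ! * ‖P n η‖ ≤ |c η| / n ! * t η ^ n := by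
          apply mul_le_mul_of_nonneg_left (hP_norm n η) (by positivity)
      _ = |ψ₀ η| * e₀ η * (t η ^ n / n !) := by rw [h2]; ring
      _ ≤ |ψ₀ η| * e₀ η * ((1/r) ^ n * Real.exp (r * t η)) := by
          apply mul_le_mul_of_nonneg_left h3 (by positivity)
      _ = (1/r) ^ n * (|ψ₀ η| * (e₀ η * Real.exp (r * t η))) := by ring
  have hFn_meas : ∀ n, AEStronglyMeasurable (Fn n) volume := by
    intro n
    exact ((hc_meas.div_const _).aestronglyMeasurable.smul (hPcont n).aestronglyMeasurable)
  have hFn_int : ∀ n, Integrable (Fn n) := by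
    intro n
    refine (hDint.const_mul ((1/r) ^ n)).mono' (hFn_meas n) ?_
    exact Filter.Eventually.of_forall fun η => hFn_norm n η
  -- the power series
  set pser : FormalMultilinearSeries ℝ (ℝ × ℝ) ℝ := fun n => ∫ η, Fn n η with hpser
  set C : ℝ := ∫ η, |ψ₀ η| * (e₀ η * Real.exp (r * t η)) with hCdef
  have hC0 : 0 ≤ C := integral_nonneg fun η => by positivity
  have hpser_norm : ∀ n, ‖pser n‖ ≤ (1/r) ^ n * C := by
    intro n
    refine (norm_integral_le_integral_norm _).trans ?_
    rw [hCdef, ← integral_const_mul]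
    exact integral_mono (hFn_int n).norm (hDint.const_mul _) (hFn_norm n)
  have habs_c : ∀ η, |c η| = |ψ₀ η| * e₀ η := by
    intro η
    rw [hcdef]
    rw [abs_mul, abs_of_pos (Real.exp_pos _)]
  have hradius : ENNReal.ofReal r ≤ pser.radius := by
    have hbnd : ∀ n : ℕ, ‖pser n‖ * (r.toNNReal : ℝ) ^ n ≤ C := by
      intro n
      rw [Real.coe_toNNReal r hr.le]
      calc ‖pser n‖ * r ^ n ≤ (1/r) ^ n * C * r ^ n :=
            mul_le_mul_of_nonneg_right (hpser_norm n) (by positivity)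
        _ = C := by
            rw [one_div, inv_pow, mul_comm ((r ^ n)⁻¹) C, mul_assoc,
              inv_mul_cancel₀ (by positivity), mul_one]
    have h := pser.le_radius_of_bound C hbnd
    simpa [ENNReal.ofReal] using h
  have hball : HasFPowerSeriesOnBall (Gf ψ₀) pser p₀ (ENNReal.ofReal r) := by
    refine ⟨hradius, ENNReal.ofReal_pos.2 hr, ?_⟩
    intro y hy
    have hy' : ‖y‖ < r := by
      have h1 : ‖y‖ₑ < ENNReal.ofReal r := by
        simpa using mem_emetric_ball_zero_iff.1 hy
      rw [← ofReal_norm] at h1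
      exact (ENNReal.ofReal_lt_ofReal_iff hr).1 h1
    set s : ℝ := ‖y‖ with hsdef
    have hs0 : 0 ≤ s := norm_nonneg y
    set w : ℝ → ℝ := fun η => -y.1 * η ^ 2 + y.2 * η with hwdef
    have hw_meas : Measurable w := by fun_prop
    have hwle : ∀ η, |w η| ≤ s * t η := by
      intro η
      have hw : w η = Λ η y := (hΛ_apply η y).symm
      rw [hw, ← Real.norm_eq_abs]
      calc ‖Λ η y‖ ≤ ‖Λ η‖ * ‖y‖ := (Λ η).le_opNorm y
        _ ≤ t η * s := mul_le_mul (hΛ_norm η) le_rfl (norm_nonneg y) (ht0 η)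
        _ = s * t η := mul_comm _ _
    set fS : ℕ → ℝ → ℝ := fun n η => c η * w η ^ n / n ! with hfSdef
    have hfS_bound : ∀ (n : ℕ) η, ‖fS n η‖ ≤ (s/r) ^ n * (|ψ₀ η| * (e₀ η * Real.exp (r * t η))) := by
      intro n η
      have h1 : ‖fS n η‖ = |c η| * |w η| ^ n / n ! := by
        rw [hfSdef, Real.norm_eq_abs, abs_div, abs_mul, abs_pow,
          abs_of_nonneg (by positivity : (0:ℝ) ≤ (n ! : ℝ))]
      rw [h1, habs_c]
      calc |ψ₀ η| * e₀ η * |w η| ^ n / n ! ≤ |ψ₀ η| * e₀ η * (s * t η) ^ n / n ! := by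
            have hpow : |w η| ^ n ≤ (s * t η) ^ n := pow_le_pow_left₀ (abs_nonneg _) (hwle η) n
            have hmul := mul_le_mul_of_nonneg_left hpow
              (by positivity : (0:ℝ) ≤ |ψ₀ η| * e₀ η)
            exact div_le_div_of_nonneg_right hmul (by positivity)
        _ = |ψ₀ η| * e₀ η * ((s * t η) ^ n / n !) := by ring
        _ ≤ |ψ₀ η| * e₀ η * ((s/r) ^ n * Real.exp (r * t η)) := by
            apply mul_le_mul_of_nonneg_left (hkey n s hs0 η) (by positivity)
        _ = (s/r) ^ n * (|ψ₀ η| * (e₀ η * Real.exp (r * t η))) := by ring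
    have hfS_meas : ∀ n : ℕ, AEStronglyMeasurable (fS n) volume := by
      intro n
      exact ((hc_meas.mul (hw_meas.pow_const n)).div_const _).aestronglyMeasurable
    have h_each : ∀ n : ℕ, Integrable (fS n) := by
      intro n
      refine (hDint.const_mul ((s/r) ^ n)).mono' (hfS_meas n) ?_
      exact Filter.Eventually.of_forall fun η => hfS_bound n η
    have hnorm_le : ∀ n : ℕ, (∫ η, ‖fS n η‖) ≤ (s/r) ^ n * C := by
      intro n
      rw [hCdef, ← integral_const_mul]
      exact integral_mono (h_each n).norm (hDint.const_mul _) (hfS_bound n)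
    have hsum : Summable fun n : ℕ => ∫ η, ‖fS n η‖ := by
      refine Summable.of_nonneg_of_le (fun n => integral_nonneg fun η => norm_nonneg _)
        hnorm_le ?_
      exact (summable_geometric_of_lt_one (by positivity) ((div_lt_one hr).2 hy')).mul_right C
    have hHasSum := hasSum_integral_of_summable_integral_norm h_each hsum
    have htsum : ∀ η, (∑' n : ℕ, fS n η) = ψ₀ η * Real.exp (-(p₀ + y).1 * η ^ 2 + (p₀ + y).2 * η) := by
      intro η
      have h := (NormedSpace.expSeries_div_hasSum_exp (w η)).mul_left (c η)
      have h2 : HasSum (fun n : ℕ => fS n η) (c η * Real.exp (w η)) := by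
        rw [Real.exp_eq_exp_ℝ]
        simpa [hfSdef, mul_div_assoc] using h
      rw [h2.tsum_eq, hcdef, he₀]
      simp only []
      rw [mul_assoc, ← Real.exp_add]
      congr 1
      simp only [Prod.fst_add, Prod.snd_add, hwdef]
      ring
    have e2 : (∫ η, ∑' n : ℕ, fS n η) = Gf ψ₀ (p₀ + y) := by
      unfold Gf
      exact integral_congr_ae (Filter.Eventually.of_forall fun η => htsum η)
    have e1 : (fun n : ℕ => pser n fun _ => y) = fun n : ℕ => ∫ η, fS n η := by
      funext n
      rw [hpser]
      rw [ContinuousMultilinearMap.integral_apply (hFn_int n)]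
      refine integral_congr_ae (Filter.Eventually.of_forall fun η => ?_)
      show Fn n η (fun _ => y) = fS n η
      calc Fn n η (fun _ => y) = (c η / n !) * (P n η fun _ => y) := by
            rw [show Fn n η = (c η / n !) • P n η from rfl]
            simp [ContinuousMultilinearMap.smul_apply]
        _ = (c η / n !) * (Λ η y) ^ n := by rw [hP_apply]
        _ = fS n η := by rw [hfSdef, hΛ_apply]; ring
    rw [e1, ← e2]
    exact hHasSum
  exact hball.analyticAt

theorem psi0_smooth (ψ₀ : ℝ → ℝ) (hmeas : Measurable ψ₀)
    (hint : ∀ m ν : ℝ, 0 < ν → Integrable (fun η => |ψ₀ η| * gpdf m ν η)) :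
    ContDiffOn ℝ (⊤ : ℕ∞) (fun p : ℝ × ℝ => ∫ η, ψ₀ η * gpdf p.1 p.2 η)
      (Set.univ ×ˢ Set.Ioi (0 : ℝ)) := by
  have hopen : IsOpen (Set.univ ×ˢ Set.Ioi (0 : ℝ)) := (isOpen_univ (X := ℝ)).prod isOpen_Ioi
  have hanal : AnalyticOnNhd ℝ (fun p : ℝ × ℝ => ∫ η, ψ₀ η * gpdf p.1 p.2 η)
      (Set.univ ×ˢ Set.Ioi (0 : ℝ)) := by
    intro p hp
    have hp2 : 0 < p.2 := hp.2
    -- the globally-defined analytic representative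
    set Φ : ℝ × ℝ → ℝ := fun q =>
      ((Real.sqrt (2 * Real.pi))⁻¹ * q.2⁻¹ * Real.exp (-(q.1 ^ 2) / (2 * q.2 ^ 2))) *
        Gf ψ₀ (1 / (2 * q.2 ^ 2), q.1 / q.2 ^ 2) with hΦdef
    have hg : AnalyticAt ℝ (fun q : ℝ × ℝ => (1 / (2 * q.2 ^ 2), q.1 / q.2 ^ 2)) p := by
      apply AnalyticAt.prod
      · exact (analyticAt_const).div ((analyticAt_const).mul ((analyticAt_snd).pow 2))
          (by positivity)
      · exact (analyticAt_fst).div ((analyticAt_snd).pow 2) (by positivity)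
    have hGf : AnalyticAt ℝ (Gf ψ₀) (1 / (2 * p.2 ^ 2), p.1 / p.2 ^ 2) :=
      analyticAt_Gf hmeas hint (by simp; positivity)
    have hcomp : AnalyticAt ℝ (fun q : ℝ × ℝ => Gf ψ₀ (1 / (2 * q.2 ^ 2), q.1 / q.2 ^ 2)) p :=
      AnalyticAt.comp (g := Gf ψ₀)
        (f := fun q : ℝ × ℝ => (1 / (2 * q.2 ^ 2), q.1 / q.2 ^ 2)) hGf hg
    have hcoef : AnalyticAt ℝ (fun q : ℝ × ℝ =>
        (Real.sqrt (2 * Real.pi))⁻¹ * q.2⁻¹ * Real.exp (-(q.1 ^ 2) / (2 * q.2 ^ 2))) p := by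
      apply AnalyticAt.mul
      · exact analyticAt_const.mul ((analyticAt_snd).inv (ne_of_gt hp2))
      · exact (analyticAt_rexp).comp
          (((analyticAt_fst.pow 2).neg).div (analyticAt_const.mul ((analyticAt_snd).pow 2))
            (by positivity))
    have hΦ : AnalyticAt ℝ Φ p := hcoef.mul hcomp
    refine hΦ.congr ?_
    have hmem : Set.univ ×ˢ Set.Ioi (0 : ℝ) ∈ 𝓝 p := hopen.mem_nhds hp
    filter_upwards [hmem] with q hq
    have hq2 : 0 < q.2 := hq.2
    rw [hΦdef]
    simp only []
    rw [Gf, ← integral_const_mul]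
    refine integral_congr_ae (Filter.Eventually.of_forall fun η => ?_)
    simp only [gpdf]
    have hsqrt : Real.sqrt (2 * Real.pi * q.2 ^ 2) = Real.sqrt (2 * Real.pi) * q.2 := by
      rw [Real.sqrt_mul (by positivity), Real.sqrt_sq hq2.le]
    have hexp : Real.exp (-(q.1 ^ 2) / (2 * q.2 ^ 2)) *
        Real.exp (-(1 / (2 * q.2 ^ 2)) * η ^ 2 + (q.1 / q.2 ^ 2) * η)
        = Real.exp (-((η - q.1) ^ 2) / (2 * q.2 ^ 2)) := by
      rw [← Real.exp_add]
      congr 1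
      field_simp
      ring
    rw [hsqrt, mul_inv]
    calc (Real.sqrt (2 * Real.pi))⁻¹ * q.2⁻¹ * Real.exp (-(q.1 ^ 2) / (2 * q.2 ^ 2)) *
          (ψ₀ η * Real.exp (-(1 / (2 * q.2 ^ 2)) * η ^ 2 + (q.1 / q.2 ^ 2) * η))
        = ψ₀ η * ((Real.sqrt (2 * Real.pi))⁻¹ * q.2⁻¹ *
            (Real.exp (-(q.1 ^ 2) / (2 * q.2 ^ 2)) *
              Real.exp (-(1 / (2 * q.2 ^ 2)) * η ^ 2 + (q.1 / q.2 ^ 2) * η))) := by ring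
      _ = ψ₀ η * ((Real.sqrt (2 * Real.pi))⁻¹ * q.2⁻¹ *
            Real.exp (-((η - q.1) ^ 2) / (2 * q.2 ^ 2))) := by rw [hexp]
  exact hanal.contDiffOn hopen.uniqueDiffOn
end

section
/- Let ψ₀ : ℝ → ℝ be convex and suppose that ∫ |ψ₀(η)| φ(η; m, ν²) dη < ∞ for every m ∈ ℝ and every ν > 0. Then the function (m, ν) ↦ Ψ₀(m, ν) = ∫ ψ₀(η) φ(η; m, ν²) dη is jointly convex in (m, ν) on ℝ × (0, ∞). -/
open MeasureTheory Real Filter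

/-!
Substituting `η = m + ν z` writes `Ψ₀(m, ν) = ∫ ψ₀(m + ν z) φ(z; 0, 1) dz`. For each fixed `z`
the integrand is a convex function of `(m, ν)` (a convex function of a linear form) times a
nonnegative weight, and an integral of convex functions is convex.
-/

theorem ConvexOn.integral {α E : Type*} [MeasurableSpace α] {μ : Measure α} [AddCommGroup E]
    [Module ℝ E] {s : Set E} {F : E → α → ℝ} (hs : Convex ℝ s)
    (hF : ∀ᵐ x ∂μ, ConvexOn ℝ s fun p => F p x) (hint : ∀ p ∈ s, Integrable (F p) μ) :
    ConvexOn ℝ s fun p => ∫ x, F p x ∂μ := by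
  refine ⟨hs, fun p hp q hq a b ha hb hab => ?_⟩
  rw [smul_eq_mul, smul_eq_mul, ← integral_const_mul, ← integral_const_mul,
    ← integral_add ((hint p hp).const_mul a) ((hint q hq).const_mul b)]
  refine integral_mono_ae (hint _ (hs hp hq ha hb hab))
    (((hint p hp).const_mul a).add ((hint q hq).const_mul b)) ?_
  filter_upwards [hF] with x hx
  exact hx.2 hp hq ha hb hab

lemma ConvexOn.comp_add_mul {f : ℝ → ℝ} (hf : ConvexOn ℝ Set.univ f) (z : ℝ) :
    ConvexOn ℝ Set.univ fun p : ℝ × ℝ => f (p.1 + p.2 * z) := by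
  have h := hf.comp_linearMap (LinearMap.fst ℝ ℝ ℝ + z • LinearMap.snd ℝ ℝ ℝ)
  rw [Set.preimage_univ] at h
  exact h.congr fun p _ => by simp [mul_comm]

lemma gpdf_nonneg (m ν x : ℝ) : 0 ≤ gpdf m ν x := by
  unfold gpdf; positivity

lemma continuous_gpdf (m ν : ℝ) : Continuous (gpdf m ν) := by
  unfold gpdf; fun_prop

lemma gpdf_add_mul {ν : ℝ} (hν : 0 < ν) (m z : ℝ) :
    gpdf m ν (m + ν * z) = ν⁻¹ * gpdf 0 1 z := by
  have hsqrt : √(2 * π * ν ^ 2) = √(2 * π * 1 ^ 2) * ν := by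
    rw [show 2 * π * ν ^ 2 = (2 * π * 1 ^ 2) * ν ^ 2 by ring,
      Real.sqrt_mul (by positivity), Real.sqrt_sq hν.le]
  have hexp : -(m + ν * z - m) ^ 2 / (2 * ν ^ 2) = -(z - 0) ^ 2 / (2 * 1 ^ 2) := by
    field_simp; ring
  unfold gpdf
  rw [hsqrt, hexp, mul_inv]
  ring

lemma integral_mul_gpdf_eq {ν : ℝ} (hν : 0 < ν) (f : ℝ → ℝ) (m : ℝ) :
    ∫ η, f η * gpdf m ν η = ∫ z, f (m + ν * z) * gpdf 0 1 z := by
  set g := fun η => f η * gpdf m ν η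
  have hg : (fun z => f (m + ν * z) * gpdf 0 1 z) = fun z => ν * g (m + ν * z) := by
    funext z
    simp only [g, gpdf_add_mul hν]
    field_simp
  rw [hg, integral_const_mul, Measure.integral_comp_mul_left (fun y => g (m + y)),
    integral_add_left_eq_self g m, smul_eq_mul, abs_of_pos (inv_pos.mpr hν),
    mul_inv_cancel_left₀ hν.ne']

lemma Integrable.comp_add_mul_mul_gpdf {ν : ℝ} (hν : 0 < ν) {f : ℝ → ℝ} {m : ℝ}
    (hf : Integrable (fun η => f η * gpdf m ν η)) :
    Integrable (fun z => f (m + ν * z) * gpdf 0 1 z) := by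
  have hg : (fun z => f (m + ν * z) * gpdf 0 1 z)
      = fun z => ν * (f (m + ν * z) * gpdf m ν (m + ν * z)) := by
    funext z
    rw [gpdf_add_mul hν]
    field_simp
  rw [hg]
  exact ((hf.comp_add_left m).comp_mul_left' hν.ne').const_mul ν

theorem psi0_convex (ψ₀ : ℝ → ℝ) (hconv : ConvexOn ℝ Set.univ ψ₀)
    (hint : ∀ m ν : ℝ, 0 < ν → Integrable (fun η => |ψ₀ η| * gpdf m ν η)) :
    ConvexOn ℝ (Set.univ ×ˢ Set.Ioi (0 : ℝ))
      (fun p : ℝ × ℝ => ∫ η, ψ₀ η * gpdf p.1 p.2 η) := by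
  have hs : Convex ℝ ((Set.univ : Set ℝ) ×ˢ Set.Ioi (0 : ℝ)) := convex_univ.prod (convex_Ioi 0)
  have hψ : Continuous ψ₀ := continuousOn_univ.mp (hconv.continuousOn isOpen_univ)
  have hconv_z (z : ℝ) : ConvexOn ℝ (Set.univ ×ˢ Set.Ioi (0 : ℝ))
      fun p : ℝ × ℝ => ψ₀ (p.1 + p.2 * z) * gpdf 0 1 z := by
    simpa [mul_comm] using ((hconv.comp_add_mul z).smul (gpdf_nonneg 0 1 z)).subset
      (Set.subset_univ _) hs
  have hint_z (p : ℝ × ℝ) (hp : p ∈ Set.univ ×ˢ Set.Ioi (0 : ℝ)) :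
      Integrable fun z => ψ₀ (p.1 + p.2 * z) * gpdf 0 1 z := by
    refine Integrable.comp_add_mul_mul_gpdf hp.2 ?_
    refine (integrable_norm_iff (hψ.mul (continuous_gpdf _ _)).aestronglyMeasurable).mp ?_
    simpa [abs_of_nonneg (gpdf_nonneg _ _ _)] using hint p.1 p.2 hp.2
  exact (ConvexOn.integral hs (.of_forall hconv_z) hint_z).congr
    fun p hp => (integral_mul_gpdf_eq hp.2 ψ₀ p.1).symm
end

section
/- Fix y ∈ ℝ, τ ∈ (0,1), m ∈ ℝ and ν > 0. Then ∫ [ (1/2)|y − η| + (τ − 1/2)(y − η) ] φ(η; m, ν²) dη = (y − m)(Φ(y; m, ν²) + τ − 1) + ν² φ(y; m, ν²). -/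
open MeasureTheory Real Filter

/-!
With `u = y - η`, the pinball loss is `(τ - 1) u + max u 0`. Against the Gaussian density the
linear part integrates to `(τ - 1) (y - m)`, and the positive part to
`∫_{η ≤ y} (y - η) φ(η) dη = (y - m) Φ(y) + ν² φ(y)`, because `-ν² φ` is an antiderivative of
`(η - m) φ` that vanishes at `-∞`.
-/

open ProbabilityTheory Set

lemma gpdf_eq_gaussianPDFReal (m ν : ℝ) :
    gpdf m ν = gaussianPDFReal m ⟨ν ^ 2, sq_nonneg ν⟩ :=
  rfl

lemma integrable_gpdf (m ν : ℝ) : Integrable (gpdf m ν) := by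
  rw [gpdf_eq_gaussianPDFReal]
  exact integrable_gaussianPDFReal _ _

lemma integral_gpdf {ν : ℝ} (m : ℝ) (hν : ν ≠ 0) : ∫ x, gpdf m ν x = 1 := by
  rw [gpdf_eq_gaussianPDFReal]
  exact integral_gaussianPDFReal_eq_one m fun h ↦ pow_ne_zero 2 hν (congrArg Subtype.val h)

lemma setIntegral_Iic_gpdf (m ν y : ℝ) : ∫ x in Iic y, gpdf m ν x = gcdf m ν y :=
  integral_Iic_eq_integral_Iio

lemma hasDerivAt_gpdf {ν : ℝ} (m : ℝ) (hν : ν ≠ 0) (x : ℝ) :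
    HasDerivAt (gpdf m ν) (-((x - m) / ν ^ 2) * gpdf m ν x) x := by
  have hexp : HasDerivAt (fun x ↦ -((x - m) ^ 2) / (2 * ν ^ 2)) (-((x - m) / ν ^ 2)) x := by
    refine ((((hasDerivAt_id' x).sub_const m).pow 2).neg.div_const (2 * ν ^ 2)).congr_deriv ?_
    field_simp
    ring
  refine (hexp.exp.const_mul (Real.sqrt (2 * Real.pi * ν ^ 2))⁻¹).congr_deriv ?_
  simp only [gpdf]
  ring

lemma tendsto_gpdf_cocompact {ν : ℝ} (m : ℝ) (hν : ν ≠ 0) :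
    Tendsto (gpdf m ν) (cocompact ℝ) (nhds 0) := by
  have hsq : Tendsto (fun x : ℝ ↦ (x - m) ^ 2) (cocompact ℝ) atTop := by
    simpa [Function.comp_def, Real.dist_eq, sq_abs] using
      (tendsto_pow_atTop two_ne_zero).comp (tendsto_dist_right_cocompact_atTop m)
  have hexp : Tendsto (fun x : ℝ ↦ -((x - m) ^ 2) / (2 * ν ^ 2)) (cocompact ℝ) atBot := by
    simp only [neg_div]
    exact tendsto_neg_atTop_atBot.comp (hsq.atTop_div_const (by positivity))
  have := (Real.tendsto_exp_atBot.comp hexp).const_mul (Real.sqrt (2 * Real.pi * ν ^ 2))⁻¹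
  rwa [mul_zero] at this

lemma integrable_sub_mul_gpdf {ν : ℝ} (m : ℝ) (hν : ν ≠ 0) :
    Integrable (fun x ↦ (x - m) * gpdf m ν x) := by
  have hb : (0 : ℝ) < (2 * ν ^ 2)⁻¹ := by positivity
  convert ((integrable_mul_exp_neg_mul_sq hb).comp_sub_right m).const_mul
    (Real.sqrt (2 * Real.pi * ν ^ 2))⁻¹ using 2 with x
  simp only [gpdf]
  ring_nf

lemma hasDerivAt_neg_sq_mul_gpdf {ν : ℝ} (m : ℝ) (hν : ν ≠ 0) (x : ℝ) :
    HasDerivAt (fun x ↦ -(ν ^ 2 * gpdf m ν x)) ((x - m) * gpdf m ν x) x := by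
  refine ((hasDerivAt_gpdf m hν x).const_mul (ν ^ 2)).neg.congr_deriv ?_
  field_simp

lemma tendsto_neg_sq_mul_gpdf_cocompact {ν : ℝ} (m : ℝ) (hν : ν ≠ 0) :
    Tendsto (fun x ↦ -(ν ^ 2 * gpdf m ν x)) (cocompact ℝ) (nhds 0) := by
  simpa using ((tendsto_gpdf_cocompact m hν).const_mul (ν ^ 2)).neg

lemma integral_sub_mul_gpdf {ν : ℝ} (m : ℝ) (hν : ν ≠ 0) :
    ∫ x, (x - m) * gpdf m ν x = 0 := by
  have hlim := tendsto_neg_sq_mul_gpdf_cocompact m hν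
  simpa using integral_of_hasDerivAt_of_tendsto (hasDerivAt_neg_sq_mul_gpdf m hν)
    (integrable_sub_mul_gpdf m hν) (hlim.mono_left atBot_le_cocompact)
    (hlim.mono_left atTop_le_cocompact)

lemma setIntegral_Iic_sub_mul_gpdf {ν : ℝ} (m : ℝ) (hν : ν ≠ 0) (y : ℝ) :
    ∫ x in Iic y, (x - m) * gpdf m ν x = -(ν ^ 2 * gpdf m ν y) := by
  simpa using integral_Iic_of_hasDerivAt_of_tendsto'
    (fun x _ ↦ hasDerivAt_neg_sq_mul_gpdf m hν x) (integrable_sub_mul_gpdf m hν).integrableOn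
    ((tendsto_neg_sq_mul_gpdf_cocompact m hν).mono_left atBot_le_cocompact)

lemma const_sub_mul_gpdf (m ν y x : ℝ) :
    (y - x) * gpdf m ν x = (y - m) * gpdf m ν x - (x - m) * gpdf m ν x := by
  ring

lemma integrable_const_sub_mul_gpdf {ν : ℝ} (m : ℝ) (hν : ν ≠ 0) (y : ℝ) :
    Integrable (fun x ↦ (y - x) * gpdf m ν x) := by
  simp_rw [const_sub_mul_gpdf m ν y]
  exact ((integrable_gpdf m ν).const_mul _).sub (integrable_sub_mul_gpdf m hν)

lemma integral_const_sub_mul_gpdf {ν : ℝ} (m : ℝ) (hν : ν ≠ 0) (y : ℝ) :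
    ∫ x, (y - x) * gpdf m ν x = y - m := by
  simp_rw [const_sub_mul_gpdf m ν y]
  rw [integral_sub ((integrable_gpdf m ν).const_mul _) (integrable_sub_mul_gpdf m hν),
    integral_const_mul, integral_gpdf m hν, integral_sub_mul_gpdf m hν]
  ring

lemma setIntegral_Iic_const_sub_mul_gpdf {ν : ℝ} (m : ℝ) (hν : ν ≠ 0) (y : ℝ) :
    ∫ x in Iic y, (y - x) * gpdf m ν x = (y - m) * gcdf m ν y + ν ^ 2 * gpdf m ν y := by
  simp_rw [const_sub_mul_gpdf m ν y]
  rw [integral_sub ((integrable_gpdf m ν).const_mul _).integrableOn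
    (integrable_sub_mul_gpdf m hν).integrableOn, integral_const_mul, setIntegral_Iic_gpdf,
    setIntegral_Iic_sub_mul_gpdf m hν]
  ring

lemma pinball_mul_eq (τ y : ℝ) (f : ℝ → ℝ) (x : ℝ) :
    ((1 / 2) * |y - x| + (τ - 1 / 2) * (y - x)) * f x
      = (τ - 1) * ((y - x) * f x) + (Iic y).indicator (fun x ↦ (y - x) * f x) x := by
  by_cases hx : x ≤ y
  · simp only [indicator_of_mem (mem_Iic.2 hx), abs_of_nonneg (sub_nonneg.2 hx)]
    ring
  · simp only [indicator_of_notMem (mt mem_Iic.1 hx), abs_of_neg (sub_neg.2 (not_le.1 hx))]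
    ring

theorem quantile_Psi0_general (y τ m ν : ℝ) (hν : 0 < ν) :
    ∫ η, ((1 / 2) * |y - η| + (τ - 1 / 2) * (y - η)) * gpdf m ν η
      = (y - m) * (gcdf m ν y + τ - 1) + ν ^ 2 * gpdf m ν y := by
  have hint := integrable_const_sub_mul_gpdf m hν.ne' y
  calc ∫ η, ((1 / 2) * |y - η| + (τ - 1 / 2) * (y - η)) * gpdf m ν η
      = ∫ η, (τ - 1) * ((y - η) * gpdf m ν η)
          + (Iic y).indicator (fun η ↦ (y - η) * gpdf m ν η) η :=
        integral_congr_ae (.of_forall (pinball_mul_eq τ y (gpdf m ν)))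
    _ = (τ - 1) * (y - m) + ((y - m) * gcdf m ν y + ν ^ 2 * gpdf m ν y) := by
        rw [integral_add (hint.const_mul _) (hint.indicator measurableSet_Iic), integral_const_mul,
          integral_indicator measurableSet_Iic, integral_const_sub_mul_gpdf m hν.ne',
          setIntegral_Iic_const_sub_mul_gpdf m hν.ne']
    _ = (y - m) * (gcdf m ν y + τ - 1) + ν ^ 2 * gpdf m ν y := by ring

theorem quantile_Psi0 (y τ m ν : ℝ) (hτ : τ ∈ Set.Ioo (0 : ℝ) 1) (hν : 0 < ν) :
    ∫ η, ((1 / 2) * |y - η| + (τ - 1 / 2) * (y - η)) * gpdf m ν η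
      = (y - m) * (gcdf m ν y + τ - 1) + ν ^ 2 * gpdf m ν y :=
  quantile_Psi0_general y τ m ν hν
end
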